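/- Let s be a real number with |s| > 1 and let T be a tree with maximum degree Δ(T) ≥ 3. Then ρ(M_T(s)) > (1 + |s|)². -/

import Mathlib

open Filter Topology

/-- The deformed Laplacian matrix `M_G(s) = I - s·A + s²·(D - I)` of a finite simple graph. -/
noncomputable def defLap {V : Type*} [Fintype V] [DecidableEq V] (G : SimpleGraph V) (s : ℝ) :
    Matrix V V ℝ :=
  letI := Classical.decRel G.Adj
  (1 : Matrix V V ℝ) - s • (G.adjMatrix ℝ) +
    s ^ 2 • (Matrix.diagonal (fun v => (G.degree v : ℝ)) - 1)

/-- The largest (real) eigenvalue of a matrix. -/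
noncomputable def lamMax {V : Type*} [Fintype V] (M : Matrix V V ℝ) : ℝ :=
  sSup {μ : ℝ | ∃ v : V → ℝ, v ≠ 0 ∧ M.mulVec v = μ • v}

/-- The spectral radius of a real matrix: the supremum of the absolute values of its
(real) eigenvalues. -/
noncomputable def specRad {V : Type*} [Fintype V] (M : Matrix V V ℝ) : ℝ :=
  sSup {x : ℝ | ∃ μ : ℝ, (∃ v : V → ℝ, v ≠ 0 ∧ M.mulVec v = μ • v) ∧ x = |μ|}

/-- The maximum degree of a finite simple graph. -/
noncomputable def maxDeg {V : Type*} [Fintype V] (G : SimpleGraph V) : ℕ :=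
  letI := Classical.decRel G.Adj
  G.maxDegree

/-!
By the Rayleigh principle, `ρ(M) ≥ xᵀMx / xᵀx` for every `x ≠ 0`. Let `u` be a vertex of
degree `d ≥ 3` and take `x = 3|s|·e_u - s·𝟙_{N(u)}`. Since the neighbours of `u` are pairwise
non-adjacent in a tree, `xᵀx = |s|²(9 + d)`, `xᵀAx = -6d|s|s` and `xᵀDx ≥ 10d|s|²`, so the
Rayleigh quotient of `M_T(s)` at `x` exceeds `(1 + |s|)²` by at least
`|s|(8d|s| + 4d - 18|s| - 18)/(9 + d) > 0`.
-/
open Matrix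

lemma lt_lamMax_of_mul_dotProduct_self_lt {V : Type*} [Fintype V] [DecidableEq V]
    {M : Matrix V V ℝ} (hM : M.IsHermitian) {c : ℝ} {x : V → ℝ}
    (h : c * (x ⬝ᵥ x) < x ⬝ᵥ (M *ᵥ x)) : c < lamMax M := by
  have hx : x ≠ 0 := by rintro rfl; simp at h
  let T := toEuclideanLin M
  have hT : T.IsSymmetric := isSymmetric_toEuclideanLin_iff.mpr hM
  have : Nontrivial (EuclideanSpace ℝ V) := ⟨⟨WithLp.toLp 2 x, 0, by simpa using hx⟩⟩
  set μ := ⨆ y : {y : EuclideanSpace ℝ V // y ≠ 0},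
    RCLike.re (inner ℝ (T y) y) / ‖(y : EuclideanSpace ℝ V)‖ ^ 2
  obtain ⟨v, hv⟩ := hT.hasEigenvalue_iSup_of_finiteDimensional.exists_hasEigenvector
  have hμ : μ ∈ {μ : ℝ | ∃ v : V → ℝ, v ≠ 0 ∧ M.mulVec v = μ • v} := by
    refine ⟨v.ofLp, by simpa using hv.2, ?_⟩
    have := congrArg WithLp.ofLp hv.apply_eq_smul
    rwa [WithLp.ofLp_smul] at this
  have hbdd : BddAbove {μ : ℝ | ∃ v : V → ℝ, v ≠ 0 ∧ M.mulVec v = μ • v} := by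
    refine (Module.End.finite_hasEigenvalue (toLin' M)).bddAbove.mono ?_
    rintro μ ⟨v, hv, hMv⟩
    exact Module.End.hasEigenvalue_of_hasEigenvector ⟨by simpa using hMv, hv⟩
  have hray : x ⬝ᵥ (M *ᵥ x) / (x ⬝ᵥ x) ≤ μ := by
    let T' := LinearMap.toContinuousLinearMap T
    refine le_ciSup_of_le ⟨‖T'‖, ?_⟩ ⟨WithLp.toLp 2 x, by simpa using hx⟩ ?_
    · rintro _ ⟨y, rfl⟩
      exact (le_abs_self _).trans (T'.rayleighQuotient_le_norm y)
    · rw [← real_inner_self_eq_norm_sq]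
      simp only [T, toLpLin_apply, RCLike.re_to_real, EuclideanSpace.inner_toLp_toLp,
        star_trivial, dotProduct_comm x]
      rfl
  have hxx : 0 < x ⬝ᵥ x := by simpa using dotProduct_star_self_pos_iff.mpr hx
  calc c < x ⬝ᵥ (M *ᵥ x) / (x ⬝ᵥ x) := by rwa [lt_div_iff₀ hxx]
    _ ≤ μ := hray
    _ ≤ lamMax M := le_csSup hbdd hμ

namespace SimpleGraph

variable {V : Type*} [DecidableEq V] (G : SimpleGraph V) [DecidableRel G.Adj]

def starVector (u : V) (α β : ℝ) : V → ℝ :=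
  fun w => if w = u then α else if G.Adj u w then β else 0

variable {G} {u : V} {α β : ℝ}

@[simp] lemma starVector_self : G.starVector u α β u = α := by simp [starVector]

lemma starVector_of_adj {w : V} (h : G.Adj u w) : G.starVector u α β w = β := by
  simp [starVector, h, h.ne']

variable [Fintype V]

lemma defLap_eq (s : ℝ) :
    defLap G s = 1 - s • G.adjMatrix ℝ + s ^ 2 • (diagonal (fun v => (G.degree v : ℝ)) - 1) := by
  unfold defLap
  congr!

lemma isHermitian_defLap (s : ℝ) : (defLap G s).IsHermitian := by
  rw [isHermitian_iff_isSymm, defLap_eq]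
  exact (isSymm_one.sub (G.isSymm_adjMatrix.smul s)).add
    (((isSymm_diagonal _).sub isSymm_one).smul _)

lemma dotProduct_defLap_mulVec (s : ℝ) (x : V → ℝ) :
    x ⬝ᵥ (defLap G s *ᵥ x) = (1 - s ^ 2) * (x ⬝ᵥ x) - s * (x ⬝ᵥ (G.adjMatrix ℝ *ᵥ x))
      + s ^ 2 * (x ⬝ᵥ (diagonal (fun v => (G.degree v : ℝ)) *ᵥ x)) := by
  simp only [defLap_eq, add_mulVec, sub_mulVec, smul_mulVec, one_mulVec, dotProduct_add,
    dotProduct_sub, dotProduct_smul, smul_eq_mul]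
  ring

lemma starVector_dotProduct (g : V → ℝ) :
    G.starVector u α β ⬝ᵥ g = α * g u + β * ∑ w ∈ G.neighborFinset u, g w := by
  have hsupp : ∀ w ∉ insert u (G.neighborFinset u), G.starVector u α β w * g w = 0 := by
    intro w hw
    simp_all [starVector]
  rw [dotProduct, ← Finset.sum_subset (Finset.subset_univ _) fun w _ hw => hsupp w hw,
    Finset.sum_insert (by simp), Finset.mul_sum]
  congr 1
  · simp [starVector]
  · refine Finset.sum_congr rfl fun w hw => ?_
    rw [mem_neighborFinset] at hw
    simp [starVector, hw, hw.ne']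

lemma starVector_dotProduct_self :
    G.starVector u α β ⬝ᵥ G.starVector u α β = α ^ 2 + G.degree u * β ^ 2 := by
  rw [starVector_dotProduct, starVector_self,
    Finset.sum_congr rfl fun w hw => starVector_of_adj ((mem_neighborFinset ..).mp hw),
    Finset.sum_const, card_neighborFinset_eq_degree, nsmul_eq_mul]
  ring

lemma adjMatrix_mulVec_starVector_of_adj (hu : G.IsIndepSet (G.neighborSet u)) {w : V}
    (h : G.Adj u w) : (G.adjMatrix ℝ *ᵥ G.starVector u α β) w = α := by
  rw [adjMatrix_mulVec_apply, Finset.sum_eq_single u]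
  · exact starVector_self
  · intro v hv hvu
    rw [mem_neighborFinset] at hv
    have : ¬ G.Adj u v := fun huv => hu h huv hv.ne hv
    simp [starVector, hvu, this]
  · simp [h.symm]

lemma starVector_dotProduct_adjMatrix_mulVec (hu : G.IsIndepSet (G.neighborSet u)) :
    G.starVector u α β ⬝ᵥ (G.adjMatrix ℝ *ᵥ G.starVector u α β) = 2 * G.degree u * α * β := by
  rw [starVector_dotProduct, adjMatrix_mulVec_apply,
    Finset.sum_congr rfl fun w hw => starVector_of_adj ((mem_neighborFinset ..).mp hw),
    Finset.sum_congr rfl fun w hw =>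
      adjMatrix_mulVec_starVector_of_adj hu ((mem_neighborFinset ..).mp hw),
    Finset.sum_const, Finset.sum_const, card_neighborFinset_eq_degree, nsmul_eq_mul,
    nsmul_eq_mul]
  ring

lemma degree_mul_le_starVector_dotProduct_diagonal_mulVec :
    G.degree u * (α ^ 2 + β ^ 2) ≤
      G.starVector u α β ⬝ᵥ (diagonal (fun v => (G.degree v : ℝ)) *ᵥ G.starVector u α β) := by
  simp only [starVector_dotProduct, mulVec_diagonal, starVector_self]
  have hnbr : ∀ w ∈ G.neighborFinset u, β ^ 2 ≤ β * (G.degree w * G.starVector u α β w) := by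
    intro w hw
    rw [mem_neighborFinset] at hw
    have : (1 : ℝ) ≤ G.degree w := by
      exact_mod_cast (G.degree_pos_iff_exists_adj w).mpr ⟨u, hw.symm⟩
    rw [starVector_of_adj hw]
    nlinarith [sq_nonneg β]
  calc G.degree u * (α ^ 2 + β ^ 2)
        = α * (G.degree u * α) + ∑ w ∈ G.neighborFinset u, β ^ 2 := by
        rw [Finset.sum_const, card_neighborFinset_eq_degree, nsmul_eq_mul]; ring
    _ ≤ _ := by
        rw [Finset.mul_sum]
        gcongr with w hw
        exact hnbr w hw

theorem sq_one_add_abs_lt_lamMax_defLap (hu : G.IsIndepSet (G.neighborSet u))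
    (hdeg : 3 ≤ G.degree u) {s : ℝ} (hs : 1 < |s|) : (1 + |s|) ^ 2 < lamMax (defLap G s) := by
  refine lt_lamMax_of_mul_dotProduct_self_lt (isHermitian_defLap s)
    (x := G.starVector u (3 * |s|) (-s)) ?_
  have hD := mul_le_mul_of_nonneg_left
    (degree_mul_le_starVector_dotProduct_diagonal_mulVec (G := G) (u := u) (α := 3 * |s|)
      (β := -s)) (sq_nonneg s)
  rw [dotProduct_defLap_mulVec, starVector_dotProduct_self,
    starVector_dotProduct_adjMatrix_mulVec hu]
  have hd : (3 : ℝ) ≤ G.degree u := by exact_mod_cast hdeg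
  generalize (G.degree u : ℝ) = d at hd hD ⊢
  generalize G.starVector u (3 * |s|) (-s) ⬝ᵥ _ = D at hD ⊢
  have hsa : s ^ 2 = |s| ^ 2 := (sq_abs s).symm
  have hcross : s * (2 * d * (3 * |s|) * -s) = -6 * d * |s| ^ 3 := by
    linear_combination (-6 * d * |s|) * hsa
  rw [neg_sq, hsa] at hD
  rw [hcross, neg_sq, hsa]
  have key : 0 < |s| ^ 3 * (8 * d * |s| + 4 * d - 18 * |s| - 18) := by
    have : 0 < 8 * d * |s| + 4 * d - 18 * |s| - 18 := by nlinarith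
    positivity
  linarith

end SimpleGraph

theorem stmt11 {V : Type*} [Fintype V] [DecidableEq V] (T : SimpleGraph V)
    (hT : T.IsTree) (s : ℝ) (hs : 1 < |s|) (hdeg : 3 ≤ maxDeg T) :
    (1 + |s|) ^ 2 < lamMax (defLap T s) := by
  let := Classical.decRel T.Adj
  obtain ⟨u, hu⟩ : ∃ u, 3 ≤ T.degree u := by
    by_contra! h
    have : T.maxDegree ≤ 2 :=
      T.maxDegree_le_of_forall_degree_le 2 fun v => Nat.le_of_lt_succ (h v)
    unfold maxDeg at hdeg
    omega
  exact SimpleGraph.sq_one_add_abs_lt_lamMax_defLap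
    (T.isIndepSet_neighborSet_of_triangleFree (hT.isAcyclic.cliqueFree le_rfl) u) hu hs
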